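/- arXiv:1004.1194 — 5 statements merged into one kernel-verified Lean document; each statement's English description precedes it below -/
import Mathlib

section
/- The min-plus product of two Monge matrices is a Monge matrix: if M and M' satisfy M[i,j] + M[i',j'] ≤ M[i,j'] + M[i',j] for all i ≤ i', j ≤ j' (and similarly M'), then the matrix P[i,k] = min_j (M[i,j] + M'[j,k]) also satisfies P[i,k] + P[i',k'] ≤ P[i,k'] + P[i',k] for all i ≤ i', k ≤ k'. -/
/-- The min-plus (tropical) product of two Monge matrices is Monge: if
`M[i,j] + M[i',j'] ≤ M[i,j'] + M[i',j]` whenever `i ≤ i'`, `j ≤ j'` (and similarly for `M'`),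
then `P[i,k] = min_j (M[i,j] + M'[j,k])` satisfies the same condition. Entries lie in
`ℝ ∪ {∞}`, with `∞ + x = ∞`. -/
theorem minplus_product_monge {ι κ μ : Type*}
    [LinearOrder ι] [LinearOrder κ] [LinearOrder μ] [Fintype κ] [Nonempty κ]
    (M : ι → κ → EReal) (M' : κ → μ → EReal)
    (hMbot : ∀ i j, M i j ≠ ⊥) (hM'bot : ∀ j k, M' j k ≠ ⊥)
    (hM : ∀ i i' j j', i ≤ i' → j ≤ j' → M i j + M i' j' ≤ M i j' + M i' j)
    (hM' : ∀ j j' k k', j ≤ j' → k ≤ k' → M' j k + M' j' k' ≤ M' j k' + M' j' k) :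
    ∀ i i' k k', i ≤ i' → k ≤ k' →
      (⨅ j, M i j + M' j k) + (⨅ j, M i' j + M' j k') ≤
        (⨅ j, M i j + M' j k') + (⨅ j, M i' j + M' j k) := by
  intro i i' k k' hii hkk
  obtain ⟨j, hj⟩ := exists_eq_ciInf_of_finite (f := fun j => M i j + M' j k')
  obtain ⟨j', hj'⟩ := exists_eq_ciInf_of_finite (f := fun j => M i' j + M' j k)
  rw [← hj, ← hj']
  rcases le_total j j' with h | h
  · calc (⨅ j, M i j + M' j k) + (⨅ j, M i' j + M' j k')
        ≤ (M i j + M' j k) + (M i' j' + M' j' k') :=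
          add_le_add (iInf_le _ j) (iInf_le _ j')
      _ = (M i j + M i' j') + (M' j k + M' j' k') := add_add_add_comm _ _ _ _
      _ ≤ (M i j + M i' j') + (M' j k' + M' j' k) :=
          add_le_add_right (hM' j j' k k' h hkk) _
      _ = (M i j + M' j k') + (M i' j' + M' j' k) := (add_add_add_comm _ _ _ _).symm
  · calc (⨅ j, M i j + M' j k) + (⨅ j, M i' j + M' j k')
        ≤ (M i j' + M' j' k) + (M i' j + M' j k') :=
          add_le_add (iInf_le _ j') (iInf_le _ j)
      _ = (M i j' + M i' j) + (M' j' k + M' j k') := add_add_add_comm _ _ _ _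
      _ ≤ (M i j + M i' j') + (M' j k' + M' j' k) :=
          add_le_add (hM i i' j' j hii h) (le_of_eq (add_comm _ _))
      _ = (M i j + M' j k') + (M i' j' + M' j' k) := (add_add_add_comm _ _ _ _).symm
end

section
/- In a totally monotone m × n matrix M, the positions of the (leftmost) row minima are monotone nondecreasing: if j(i) denotes the smallest column index achieving the minimum of row i, then i ≤ i' implies j(i) ≤ j(i'). -/
/-- In a totally monotone `m × n` real matrix, the positions of the leftmost row minima are
monotone nondecreasing in the row index. -/
theorem totallyMonotone_leftmost_minima_monotone {m n : ℕ}
    (M : Fin m → Fin n → ℝ)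
    (hTM : ∀ i i' : Fin m, ∀ j j' : Fin n, i < i' → j < j' →
      M i j > M i j' → M i' j > M i' j')
    (j : Fin m → Fin n)
    (hj : ∀ i, IsLeast {k : Fin n | ∀ k', M i k ≤ M i k'} (j i)) :
    ∀ i i' : Fin m, i ≤ i' → j i ≤ j i' := by
  intro i i' hii
  rcases eq_or_lt_of_le hii with rfl | hlt
  · exact le_refl _
  by_contra h
  push_neg at h
  have h1 : M i (j i') > M i (j i) := by
    by_contra hle
    push_neg at hle
    have hmem : j i' ∈ {k : Fin n | ∀ k', M i k ≤ M i k'} := by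
      intro k'
      exact le_trans hle ((hj i).1 k')
    exact absurd ((hj i).2 hmem) (not_le.mpr h)
  have h2 := hTM i i' (j i') (j i) hlt h h1
  exact absurd ((hj i').1 (j i)) (not_le.mpr h2)
end

section
/- For the edit-distance grid DAG between strings A' and B', the DIST matrix from input boundary vertices to output boundary vertices (ordered from the bottom-left corner to the top-right corner along each boundary) satisfies the Monge condition on its finite entries: for inputs i ≤ i' and outputs j ≤ j', DIST[i,j] + DIST[i',j'] ≤ DIST[i,j'] + DIST[i',j], whenever all four relevant paths exist. This follows because any path from i to j' and any path from i' to j in the planar grid must cross. -/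
/-- Adjacency of the edit-distance grid DAG: from `(r,c)` there are edges to `(r+1,c)`,
`(r,c+1)` and `(r+1,c+1)`. -/
def GridAdj (p q : ℕ × ℕ) : Prop :=
  (q.1 = p.1 + 1 ∧ q.2 = p.2) ∨ (q.1 = p.1 ∧ q.2 = p.2 + 1) ∨
    (q.1 = p.1 + 1 ∧ q.2 = p.2 + 1)

/-- The weight of a walk (a list of consecutive vertices): the sum of its edge weights. -/
noncomputable def walkWeight (w : ℕ × ℕ → ℕ × ℕ → EReal) : List (ℕ × ℕ) → EReal
  | [] => 0
  | [_] => 0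
  | a :: b :: t => w a b + walkWeight w (b :: t)

/-- `l` is a walk from `u` to `v`. -/
def IsWalk (u v : ℕ × ℕ) (l : List (ℕ × ℕ)) : Prop :=
  l.head? = some u ∧ l.getLast? = some v ∧ l.Chain' GridAdj

/-- The minimum weight of a walk from `u` to `v` staying inside the `(N+1) × (M+1)` grid
(`∞` if there is no such walk). -/
noncomputable def gridDist (w : ℕ × ℕ → ℕ × ℕ → EReal) (N M : ℕ) (u v : ℕ × ℕ) : EReal :=
  sInf {c | ∃ l, IsWalk u v l ∧ (∀ z ∈ l, z.1 ≤ N ∧ z.2 ≤ M) ∧ walkWeight w l = c}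

/-- The `i`-th input boundary vertex, ordered from the bottom-left corner `(N,0)` up the
first column and then along the first row to the top-right corner `(0,M)`. -/
def gridInput (N : ℕ) (i : ℕ) : ℕ × ℕ := if i ≤ N then (N - i, 0) else (0, i - N)

/-- The `j`-th output boundary vertex, ordered from the bottom-left corner `(N,0)` along the
last row and then up the last column to the top-right corner `(0,M)`. -/
def gridOutput (N M : ℕ) (j : ℕ) : ℕ × ℕ := if j ≤ M then (N, j) else (N + M - j, M)

attribute [local instance] Classical.propDecidable

namespace EDM

lemma adj_facts {p q : ℕ × ℕ} (h : GridAdj p q) :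
    p.1 ≤ q.1 ∧ q.1 ≤ p.1 + 1 ∧ p.2 ≤ q.2 ∧ q.2 ≤ p.2 + 1 := by
  rcases h with ⟨h1, h2⟩ | ⟨h1, h2⟩ | ⟨h1, h2⟩ <;> omega

lemma adj_same_row {p q : ℕ × ℕ} (h : GridAdj p q) (hr : p.1 = q.1) : q.2 = p.2 + 1 := by
  rcases h with ⟨h1, h2⟩ | ⟨h1, h2⟩ | ⟨h1, h2⟩ <;> omega

lemma chain_adj {l : List (ℕ × ℕ)} (h : l.Chain' GridAdj) {i : ℕ} (hi : i + 1 < l.length) :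
    GridAdj l[i] l[i + 1] := by
  have := List.isChain_iff_getElem.mp h i (by omega)
  simpa using this

lemma mono {l : List (ℕ × ℕ)} (h : l.Chain' GridAdj) {a b : ℕ} (hab : a ≤ b)
    (hb : b < l.length) :
    (l[a]'(lt_of_le_of_lt hab hb)).1 ≤ l[b].1 ∧ (l[a]'(lt_of_le_of_lt hab hb)).2 ≤ l[b].2 := by
  induction b, hab using Nat.le_induction with
  | base => exact ⟨le_rfl, le_rfl⟩
  | succ b hab ih =>
    have hb' : b < l.length := by omega
    have h1 := adj_facts (chain_adj h (show b + 1 < l.length from hb))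
    have h2 := ih hb'
    exact ⟨le_trans h2.1 h1.1, le_trans h2.2 h1.2.2.1⟩

/-- Contiguity: the vertices of a grid walk within a single row form a contiguous
column interval. -/
lemma mem_of_row {l : List (ℕ × ℕ)} (h : l.Chain' GridAdj) {a b : ℕ} (hab : a ≤ b)
    (hb : b < l.length) (hrow : (l[a]'(lt_of_le_of_lt hab hb)).1 = l[b].1) {x : ℕ × ℕ}
    (hx1 : x.1 = l[b].1) (hxa : (l[a]'(lt_of_le_of_lt hab hb)).2 ≤ x.2)
    (hxb : x.2 ≤ l[b].2) : x ∈ l := by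
  induction b, hab using Nat.le_induction with
  | base =>
    have : x = l[a]'hb := Prod.ext (by omega) (by omega)
    exact this ▸ List.getElem_mem hb
  | succ b hab ih =>
    have hb' : b < l.length := by omega
    have hadj := chain_adj h (show b + 1 < l.length from hb)
    have hfacts := adj_facts hadj
    have hmono := mono h hab hb'
    have hrow' : (l[a]'(lt_of_le_of_lt hab hb')).1 = l[b].1 := by omega
    have hsame : l[b+1].2 = l[b].2 + 1 := adj_same_row hadj (by omega)
    by_cases hc : x.2 ≤ l[b].2
    · exact ih hb' hrow' (by omega) hxa hc
    · have : x = l[b+1]'hb := Prod.ext (by omega) (by omega)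
      exact this ▸ List.getElem_mem hb

/-- If `x` lies in the same row as some walk vertex, weakly to its left, and the walk
cannot be "blocked from below", then `x` is a vertex of the walk. -/
lemma find_on_row {p : List (ℕ × ℕ)} (hp : p.Chain' GridAdj) (hplen : 0 < p.length)
    (hbdry : (p[0]'hplen).2 = 0 ∨ (p[0]'hplen).1 = 0)
    {a : ℕ} (ha : a < p.length) {x : ℕ × ℕ} (h1 : p[a].1 = x.1) (h2 : x.2 ≤ p[a].2)
    (hxpos : 0 < x.1)
    (hnot : ∀ c (hc : c < p.length), p[c].1 + 1 = x.1 → x.2 ≤ p[c].2 → False) :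
    x ∈ p := by
  have hex2 : ∃ c, ∃ hc : c < p.length, p[c].1 = x.1 := ⟨a, ha, h1⟩
  obtain ⟨a0, ⟨ha0, hrow0⟩, ha0min⟩ :
      ∃ a0, (∃ hc : a0 < p.length, p[a0].1 = x.1) ∧
        ∀ c, c < a0 → ¬ ∃ hc : c < p.length, p[c].1 = x.1 :=
    ⟨Nat.find hex2, Nat.find_spec hex2, fun c hc => Nat.find_min hex2 hc⟩
  have ha0le : a0 ≤ a := by
    by_contra hcon
    exact ha0min a (by omega) ⟨ha, h1⟩
  by_cases hmin : (p[a0]'ha0).2 ≤ x.2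
  · exact mem_of_row hp ha0le ha (by omega) (by omega) hmin h2
  · -- p[a0].2 > x.2 : derive a contradiction
    exfalso
    by_cases h0 : a0 = 0
    · subst h0
      rcases hbdry with hb | hb
      · omega
      · omega
    · obtain ⟨a1, rfl⟩ : ∃ k, a0 = k + 1 := ⟨a0 - 1, by omega⟩
      have ha1 : a1 < p.length := by omega
      have hne' : p[a1].1 ≠ x.1 := fun hh => ha0min a1 (by omega) ⟨ha1, hh⟩
      have hmono := mono hp (show a1 ≤ a1 + 1 by omega) ha0
      have hfacts := adj_facts (chain_adj hp (show a1 + 1 < p.length from ha0))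
      exact hnot a1 ha1 (by omega) (by omega)

/-- The crossing lemma: two monotone grid walks, where `q` starts weakly above-right of
`p`'s start and ends weakly below-left of `p`'s end, and `p` starts on the input
boundary, must share a vertex. -/
lemma crossing {p q : List (ℕ × ℕ)} (hp : p.Chain' GridAdj) (hq : q.Chain' GridAdj)
    (hplen : 0 < p.length) (hqlen : 0 < q.length)
    (hstart1 : (q[0]'hqlen).1 ≤ (p[0]'hplen).1)
    (hstart2 : (p[0]'hplen).2 ≤ (q[0]'hqlen).2)
    (hend1 : (p[p.length - 1]'(by omega)).1 ≤ (q[q.length - 1]'(by omega)).1)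
    (hend2 : (q[q.length - 1]'(by omega)).2 ≤ (p[p.length - 1]'(by omega)).2)
    (hbdry : (p[0]'hplen).2 = 0 ∨ (p[0]'hplen).1 = 0) :
    ∃ x, x ∈ p ∧ x ∈ q := by
  have hex : ∃ b, ∃ hb : b < q.length,
      ∃ a, ∃ ha : a < p.length, p[a].1 ≤ q[b].1 ∧ q[b].2 ≤ p[a].2 :=
    ⟨q.length - 1, by omega, p.length - 1, by omega, hend1, hend2⟩
  obtain ⟨b, ⟨hb, a, ha, hpa1, hpa2⟩, hbmin⟩ :
      ∃ b, (∃ hb : b < q.length,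
          ∃ a, ∃ ha : a < p.length, p[a].1 ≤ q[b].1 ∧ q[b].2 ≤ p[a].2) ∧
        ∀ c, c < b → ¬ ∃ hc : c < q.length,
          ∃ a, ∃ ha : a < p.length, p[a].1 ≤ q[c].1 ∧ q[c].2 ≤ p[a].2 :=
    ⟨Nat.find hex, Nat.find_spec hex, fun c hc => Nat.find_min hex hc⟩
  refine ⟨q[b], ?_, List.getElem_mem hb⟩
  by_cases hb0 : b = 0
  · -- start case: q[0] is on p by contiguity in the first row of p
    subst hb0
    have hmono := mono hp (Nat.zero_le a) ha
    exact mem_of_row hp (Nat.zero_le a) ha (by omega) (by omega) (by omega) hpa2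
  · obtain ⟨b1, rfl⟩ : ∃ k, b = k + 1 := ⟨b - 1, by omega⟩
    have hb1 : b1 < q.length := by omega
    have hnot : ∀ a' (ha' : a' < p.length), p[a'].1 ≤ q[b1].1 → q[b1].2 ≤ p[a'].2 → False :=
      fun a' ha' u v => hbmin b1 (by omega) ⟨hb1, a', ha', u, v⟩
    have hadj := chain_adj hq (show b1 + 1 < q.length from hb)
    rcases hadj with ⟨e1, e2⟩ | ⟨e1, e2⟩ | ⟨e1, e2⟩
    · -- vertical step
      have hrow : p[a].1 = q[b1+1].1 := by
        have h' : ¬ p[a].1 ≤ q[b1].1 := fun hle => hnot a ha hle (by omega)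
        omega
      refine find_on_row hp hplen hbdry ha hrow hpa2 (by omega) ?_
      intro c hc u v
      exact hnot c hc (by omega) (by omega)
    · -- horizontal step: impossible, q[b1] would already be in the region
      exact absurd (hnot a ha (by omega) (by omega)) not_false
    · -- diagonal step
      have hrow : p[a].1 = q[b1+1].1 := by
        have h' : ¬ p[a].1 ≤ q[b1].1 := fun hle => hnot a ha hle (by omega)
        omega
      refine find_on_row hp hplen hbdry ha hrow hpa2 (by omega) ?_
      intro c hc u v
      exact hnot c hc (by omega) (by omega)

lemma walkWeight_nonneg (w : ℕ × ℕ → ℕ × ℕ → EReal) (hw : ∀ u v, 0 ≤ w u v) :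
    ∀ l, 0 ≤ walkWeight w l
  | [] => le_refl _
  | [_] => le_refl _
  | a :: b :: t => by
    rw [walkWeight]
    exact add_nonneg (hw a b) (walkWeight_nonneg w hw (b :: t))

lemma walkWeight_splice (w : ℕ × ℕ → ℕ × ℕ → EReal) (x : ℕ × ℕ) :
    ∀ (l1 : List (ℕ × ℕ)) (l2 : List (ℕ × ℕ)),
      walkWeight w (l1 ++ x :: l2) = walkWeight w (l1 ++ [x]) + walkWeight w (x :: l2)
  | [], l2 => by simp [walkWeight]
  | [a], l2 => by
    show walkWeight w (a :: x :: l2) = walkWeight w [a, x] + walkWeight w (x :: l2)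
    rw [walkWeight, walkWeight, walkWeight, add_zero]
  | a :: b :: t, l2 => by
    have ih := walkWeight_splice w x (b :: t) l2
    show walkWeight w (a :: b :: (t ++ x :: l2)) =
      walkWeight w (a :: b :: (t ++ [x])) + walkWeight w (x :: l2)
    rw [walkWeight]
    rw [show b :: (t ++ x :: l2) = (b :: t) ++ x :: l2 from rfl, ih]
    rw [show walkWeight w (a :: b :: (t ++ [x])) =
      w a b + walkWeight w ((b :: t) ++ [x]) from rfl]
    rw [add_assoc]

lemma gridDist_nonneg (w : ℕ × ℕ → ℕ × ℕ → EReal) (hw : ∀ u v, 0 ≤ w u v) (N M : ℕ)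
    (u v : ℕ × ℕ) : 0 ≤ gridDist w N M u v := by
  refine le_sInf ?_
  rintro c ⟨l, _, _, rfl⟩
  exact walkWeight_nonneg w hw l

lemma input_le {N : ℕ} {i i' : ℕ} (h : i ≤ i') :
    (gridInput N i').1 ≤ (gridInput N i).1 ∧ (gridInput N i).2 ≤ (gridInput N i').2 := by
  unfold gridInput
  split_ifs <;> simp <;> omega

lemma output_le {N M : ℕ} {j j' : ℕ} (h : j ≤ j') :
    (gridOutput N M j').1 ≤ (gridOutput N M j).1 ∧
      (gridOutput N M j).2 ≤ (gridOutput N M j').2 := by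
  unfold gridOutput
  split_ifs <;> simp <;> omega

lemma input_bdry (N i : ℕ) : (gridInput N i).2 = 0 ∨ (gridInput N i).1 = 0 := by
  unfold gridInput
  split_ifs <;> simp

lemma head_getLast_of_isWalk {u v : ℕ × ℕ} {l : List (ℕ × ℕ)} (h : IsWalk u v l) :
    ∃ hl : 0 < l.length, l[0] = u ∧ l[l.length - 1] = v := by
  obtain ⟨h1, h2, _⟩ := h
  have hne : l ≠ [] := by
    intro hh; rw [hh] at h1; simp at h1
  have hl : 0 < l.length := List.length_pos_iff.mpr hne
  refine ⟨hl, ?_, ?_⟩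
  · have := List.head?_eq_head hne
    rw [this] at h1
    rw [← Option.some.inj h1]
    exact (l.head_eq_getElem hne).symm
  · have := List.getLast?_eq_getLast hne
    rw [this] at h2
    rw [← Option.some.inj h2]
    exact (l.getLast_eq_getElem hne).symm

lemma isWalk_splice {s t s' t' x : ℕ × ℕ} {u v y z : List (ℕ × ℕ)}
    (hP : IsWalk s t (u ++ x :: v)) (hQ : IsWalk s' t' (y ++ x :: z)) :
    IsWalk s t' (u ++ x :: z) := by
  obtain ⟨hP1, hP2, hP3⟩ := hP
  obtain ⟨hQ1, hQ2, hQ3⟩ := hQ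
  have hPc := List.isChain_append.mp hP3
  have hQc := List.isChain_append.mp hQ3
  refine ⟨?_, ?_, ?_⟩
  · rw [← hP1]
    cases u <;> simp
  · rw [← hQ2]
    rw [List.getLast?_append_cons, List.getLast?_append_cons]
  · refine List.isChain_append.mpr ⟨hPc.1, hQc.2.1, ?_⟩
    intro a hha b hhb
    simp only [List.head?_cons, Option.mem_def, Option.some.injEq] at hhb
    subst hhb
    exact hPc.2.2 a hha x (by simp)

end EDM

/-- The `DIST` matrix of an edit-distance grid DAG with nonnegative weights satisfies the
Monge condition on its finite entries: for inputs `i ≤ i'` and outputs `j ≤ j'`,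
`DIST[i,j] + DIST[i',j'] ≤ DIST[i,j'] + DIST[i',j]`, whenever all four paths exist. -/
theorem gridDist_monge (w : ℕ × ℕ → ℕ × ℕ → EReal) (hw : ∀ u v, 0 ≤ w u v)
    (N M : ℕ) (i i' j j' : ℕ)
    (hii' : i ≤ i') (hi' : i' ≤ N + M) (hjj' : j ≤ j') (hj' : j' ≤ N + M)
    (h1 : gridDist w N M (gridInput N i) (gridOutput N M j) ≠ ⊤)
    (h2 : gridDist w N M (gridInput N i') (gridOutput N M j') ≠ ⊤)
    (h3 : gridDist w N M (gridInput N i) (gridOutput N M j') ≠ ⊤)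
    (h4 : gridDist w N M (gridInput N i') (gridOutput N M j) ≠ ⊤) :
    gridDist w N M (gridInput N i) (gridOutput N M j) +
        gridDist w N M (gridInput N i') (gridOutput N M j') ≤
      gridDist w N M (gridInput N i) (gridOutput N M j') +
        gridDist w N M (gridInput N i') (gridOutput N M j) := by
  classical
  set D3 := gridDist w N M (gridInput N i) (gridOutput N M j') with hD3
  set D4 := gridDist w N M (gridInput N i') (gridOutput N M j) with hD4
  have hD3nn : 0 ≤ D3 := EDM.gridDist_nonneg w hw N M _ _
  have hD4nn : 0 ≤ D4 := EDM.gridDist_nonneg w hw N M _ _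
  have hD3bot : D3 ≠ ⊥ := fun hh => by simp [hh] at hD3nn
  have hD4bot : D4 ≠ ⊥ := fun hh => by simp [hh] at hD4nn
  set x3 : ℝ := D3.toReal with hx3def
  set x4 : ℝ := D4.toReal with hx4def
  have hx3 : ((x3 : ℝ) : EReal) = D3 := EReal.coe_toReal h3 hD3bot
  have hx4 : ((x4 : ℝ) : EReal) = D4 := EReal.coe_toReal h4 hD4bot
  refine le_of_forall_gt_imp_ge_of_dense ?_
  intro c hc
  rw [← hx3, ← hx4, ← EReal.coe_add] at hc
  obtain ⟨y, hy1, hy2⟩ := EReal.exists_between_coe_real hc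
  set ε : ℝ := (y - (x3 + x4)) / 2 with hεdef
  have hεpos : 0 < ε := by
    have := EReal.coe_lt_coe_iff.mp hy1
    simp only [hεdef]
    linarith
  -- get a near-optimal walk for D3
  have hlt3 : D3 < ((x3 + ε : ℝ) : EReal) := by
    rw [← hx3]; exact_mod_cast (by linarith : x3 < x3 + ε)
  have hlt4 : D4 < ((x4 + ε : ℝ) : EReal) := by
    rw [← hx4]; exact_mod_cast (by linarith : x4 < x4 + ε)
  obtain ⟨c3, hc3mem, hc3lt⟩ := sInf_lt_iff.mp hlt3
  obtain ⟨c4, hc4mem, hc4lt⟩ := sInf_lt_iff.mp hlt4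
  obtain ⟨P, hPwalk, hPbnd, rfl⟩ := hc3mem
  obtain ⟨Q, hQwalk, hQbnd, rfl⟩ := hc4mem
  -- the two walks cross
  obtain ⟨hPlen, hPhead, hPlast⟩ := EDM.head_getLast_of_isWalk hPwalk
  obtain ⟨hQlen, hQhead, hQlast⟩ := EDM.head_getLast_of_isWalk hQwalk
  have hin := EDM.input_le (N := N) hii'
  have hout := EDM.output_le (N := N) (M := M) hjj'
  obtain ⟨x, hxP, hxQ⟩ := EDM.crossing hPwalk.2.2 hQwalk.2.2 hPlen hQlen
    (by rw [hPhead, hQhead]; exact hin.1) (by rw [hPhead, hQhead]; exact hin.2)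
    (by rw [hPlast, hQlast]; exact hout.1) (by rw [hPlast, hQlast]; exact hout.2)
    (by rw [hPhead]; exact EDM.input_bdry N i)
  obtain ⟨u, v, rfl⟩ := List.append_of_mem hxP
  obtain ⟨y', z, rfl⟩ := List.append_of_mem hxQ
  -- splice the walks
  have hW1 : IsWalk (gridInput N i) (gridOutput N M j) (u ++ x :: z) :=
    EDM.isWalk_splice hPwalk hQwalk
  have hW2 : IsWalk (gridInput N i') (gridOutput N M j') (y' ++ x :: v) :=
    EDM.isWalk_splice hQwalk hPwalk
  have hB1 : ∀ t ∈ u ++ x :: z, t.1 ≤ N ∧ t.2 ≤ M := by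
    intro t ht
    rcases List.mem_append.mp ht with h | h
    · exact hPbnd t (List.mem_append.mpr (Or.inl h))
    · exact hQbnd t (List.mem_append.mpr (Or.inr h))
  have hB2 : ∀ t ∈ y' ++ x :: v, t.1 ≤ N ∧ t.2 ≤ M := by
    intro t ht
    rcases List.mem_append.mp ht with h | h
    · exact hQbnd t (List.mem_append.mpr (Or.inl h))
    · exact hPbnd t (List.mem_append.mpr (Or.inr h))
  have hle1 : gridDist w N M (gridInput N i) (gridOutput N M j) ≤
      walkWeight w (u ++ x :: z) := sInf_le ⟨u ++ x :: z, hW1, hB1, rfl⟩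
  have hle2 : gridDist w N M (gridInput N i') (gridOutput N M j') ≤
      walkWeight w (y' ++ x :: v) := sInf_le ⟨y' ++ x :: v, hW2, hB2, rfl⟩
  have hsum : walkWeight w (u ++ x :: z) + walkWeight w (y' ++ x :: v) =
      walkWeight w (u ++ x :: v) + walkWeight w (y' ++ x :: z) := by
    have habcd : ∀ a b c d : EReal, a + b + (c + d) = a + d + (c + b) := by
      intro a b c d
      abel
    rw [EDM.walkWeight_splice w x u z, EDM.walkWeight_splice w x y' v,
      EDM.walkWeight_splice w x u v, EDM.walkWeight_splice w x y' z]
    exact habcd _ _ _ _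
  calc gridDist w N M (gridInput N i) (gridOutput N M j) +
        gridDist w N M (gridInput N i') (gridOutput N M j')
      ≤ walkWeight w (u ++ x :: z) + walkWeight w (y' ++ x :: v) := add_le_add hle1 hle2
    _ = walkWeight w (u ++ x :: v) + walkWeight w (y' ++ x :: z) := hsum
    _ ≤ ((x3 + ε : ℝ) : EReal) + ((x4 + ε : ℝ) : EReal) := add_le_add hc3lt.le hc4lt.le
    _ = ((y : ℝ) : EReal) := by
        rw [← EReal.coe_add]
        congr 1
        simp only [hεdef]
        ring
    _ ≤ c := hy2.le
end

section
/- Let T be a binary parse tree and let v, w be two incomparable vertices (neither an ancestor of the other) with v to the left of w, and let u be their lowest common ancestor. Then the substring of leaves strictly between the subtree of v and the subtree of w is exactly the concatenation of: the strings derived by the right children of the vertices on the v-to-u path (excluding u) whose right child is not on the path, in bottom-to-top order, followed by the strings derived by the left children of the vertices on the u-to-w path (excluding u) whose left child is not on the path, in top-to-bottom order. -/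
/-- A binary parse tree whose leaves are the characters of a string. -/
inductive PTree (α : Type*) where
  | leaf (a : α)
  | node (l r : PTree α)

/-- The string derived by a (sub)tree: its leaves read left to right. -/
def PTree.str {α : Type*} : PTree α → List α
  | .leaf a => [a]
  | .node l r => l.str ++ r.str

/-- The subtree at a given root-to-vertex path (`false` = go left, `true` = go right). -/
def PTree.subtreeAt {α : Type*} : PTree α → List Bool → Option (PTree α)
  | t, [] => some t
  | .leaf _, _ :: _ => none
  | .node l r, b :: p => if b then r.subtreeAt p else l.subtreeAt p

/-- The index in the derived string at which the substring derived by the vertex at the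
given path begins. -/
def PTree.startIdx {α : Type*} : PTree α → List Bool → ℕ
  | _, [] => 0
  | .leaf _, _ :: _ => 0
  | .node l r, b :: p => if b then l.str.length + r.startIdx p else l.startIdx p

/-- The concatenation, in bottom-to-top order along the upward path from the vertex at `p`,
of the strings derived by the right children of the path vertices through whose left child
the path passes. -/
def PTree.afterLeaves {α : Type*} : PTree α → List Bool → List α
  | _, [] => []
  | .leaf _, _ :: _ => []
  | .node l r, b :: p => if b then r.afterLeaves p else l.afterLeaves p ++ r.str

/-- The concatenation, in top-to-bottom order along the downward path to the vertex at `p`,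
of the strings derived by the left children of the path vertices through whose right child
the path passes. -/
def PTree.beforeLeaves {α : Type*} : PTree α → List Bool → List α
  | _, [] => []
  | .leaf _, _ :: _ => []
  | .node l r, b :: p => if b then l.str ++ r.beforeLeaves p else l.beforeLeaves p


lemma PTree.subtreeAt_append {α : Type*} (t : PTree α) (p q : List Bool) :
    t.subtreeAt (p ++ q) = (t.subtreeAt p).bind (·.subtreeAt q) := by
  induction p generalizing t with
  | nil => simp [PTree.subtreeAt]
  | cons b p ih =>
    cases t with
    | leaf a => simp [PTree.subtreeAt]
    | node l r =>
      cases b <;> simp [PTree.subtreeAt, ih]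

lemma PTree.startIdx_append {α : Type*} (t : PTree α) (p q : List Bool) (s : PTree α)
    (h : t.subtreeAt p = some s) :
    t.startIdx (p ++ q) = t.startIdx p + s.startIdx q := by
  induction p generalizing t with
  | nil =>
    simp [PTree.subtreeAt] at h
    subst h; simp [PTree.startIdx]
  | cons b p ih =>
    cases t with
    | leaf a => simp [PTree.subtreeAt] at h
    | node l r =>
      cases b <;> simp_all [PTree.subtreeAt, PTree.startIdx] <;> omega

lemma PTree.exists_split {α : Type*} (t : PTree α) (p : List Bool) (s : PTree α)
    (h : t.subtreeAt p = some s) :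
    ∃ pre suf : List α, t.str = pre ++ s.str ++ suf ∧ pre.length = t.startIdx p := by
  induction p generalizing t with
  | nil =>
    simp [PTree.subtreeAt] at h
    subst h; exact ⟨[], [], by simp, by simp [PTree.startIdx]⟩
  | cons b p ih =>
    cases t with
    | leaf a => simp [PTree.subtreeAt] at h
    | node l r =>
      cases b with
      | false =>
        simp [PTree.subtreeAt] at h
        obtain ⟨pre, suf, h1, h2⟩ := ih l h
        exact ⟨pre, suf ++ r.str, by simp [PTree.str, h1], by simp [PTree.startIdx, h2]⟩
      | true =>
        simp [PTree.subtreeAt] at h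
        obtain ⟨pre, suf, h1, h2⟩ := ih r h
        exact ⟨l.str ++ pre, suf, by simp [PTree.str, h1], by simp [PTree.startIdx, h2]⟩

lemma PTree.startIdx_add_le {α : Type*} (t : PTree α) (p : List Bool) (s : PTree α)
    (h : t.subtreeAt p = some s) :
    t.startIdx p + s.str.length ≤ t.str.length := by
  obtain ⟨pre, suf, h1, h2⟩ := t.exists_split p s h
  rw [h1]; simp only [List.length_append, ← h2]; omega

lemma PTree.drop_eq_afterLeaves {α : Type*} (t : PTree α) (p : List Bool) (s : PTree α)
    (h : t.subtreeAt p = some s) :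
    t.str.drop (t.startIdx p + s.str.length) = t.afterLeaves p := by
  induction p generalizing t with
  | nil =>
    simp [PTree.subtreeAt] at h
    subst h; simp [PTree.startIdx, PTree.afterLeaves]
  | cons b p ih =>
    cases t with
    | leaf a => simp [PTree.subtreeAt] at h
    | node l r =>
      cases b with
      | false =>
        simp only [PTree.subtreeAt, Bool.false_eq_true, if_neg, reduceIte] at h
        have hle := l.startIdx_add_le p s h
        simp only [PTree.startIdx, PTree.afterLeaves, PTree.str, Bool.false_eq_true, reduceIte]
        rw [List.drop_append, ih l h,
          Nat.sub_eq_zero_of_le hle, List.drop_zero]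
      | true =>
        simp only [PTree.subtreeAt, reduceIte] at h
        simp only [PTree.startIdx, PTree.afterLeaves, PTree.str, reduceIte]
        rw [List.drop_append]
        have h2 : l.str.length + r.startIdx p + s.str.length - l.str.length
            = r.startIdx p + s.str.length := by omega
        rw [List.drop_eq_nil_of_le (by omega), h2, ih r h, List.nil_append]

lemma PTree.take_eq_beforeLeaves {α : Type*} (t : PTree α) (p : List Bool) (s : PTree α)
    (h : t.subtreeAt p = some s) :
    t.str.take (t.startIdx p) = t.beforeLeaves p := by
  induction p generalizing t with
  | nil =>
    simp [PTree.startIdx, PTree.beforeLeaves]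
  | cons b p ih =>
    cases t with
    | leaf a => simp [PTree.subtreeAt] at h
    | node l r =>
      cases b with
      | false =>
        simp only [PTree.subtreeAt, Bool.false_eq_true, reduceIte] at h
        simp only [PTree.startIdx, PTree.beforeLeaves, PTree.str, Bool.false_eq_true, reduceIte]
        rw [List.take_append, ih l h]
        have hle := l.startIdx_add_le p s h
        rw [Nat.sub_eq_zero_of_le (by omega), List.take_zero, List.append_nil]
      | true =>
        simp only [PTree.subtreeAt, reduceIte] at h
        simp only [PTree.startIdx, PTree.beforeLeaves, PTree.str, reduceIte]
        rw [List.take_append, List.take_of_length_le (by omega)]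
        congr 1
        rw [Nat.add_sub_cancel_left, ih r h]

/-- Let `v` and `w` be incomparable vertices of a parse tree, `v` to the left of `w`, with
lowest common ancestor `u` (so `v = pu ++ false :: vs` and `w = pu ++ true :: ws` where `pu`
is the path to `u`, whose children are `sl` and `sr`). Then the substring of leaves strictly
between the subtree of `v` and the subtree of `w` is exactly the concatenation of the strings
derived by the right children of the vertices on the `v`-to-`u` path (excluding `u`) whose
right child is not on the path, in bottom-to-top order, followed by the strings derived by
the left children of the vertices on the `u`-to-`w` path (excluding `u`) whose left child is
not on the path, in top-to-bottom order. -/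
theorem PTree.between_subtrees_eq {α : Type*} (t : PTree α)
    (pu vs ws : List Bool) (sl sr sv sw : PTree α)
    (hu : t.subtreeAt pu = some (PTree.node sl sr))
    (hv : t.subtreeAt (pu ++ false :: vs) = some sv)
    (hw : t.subtreeAt (pu ++ true :: ws) = some sw) :
    ((t.str.drop (t.startIdx (pu ++ false :: vs) + sv.str.length)).take
        (t.startIdx (pu ++ true :: ws) -
          (t.startIdx (pu ++ false :: vs) + sv.str.length))) =
      sl.afterLeaves vs ++ sr.beforeLeaves ws := by
  obtain ⟨pre, suf, hsplit, hlen⟩ := t.exists_split pu _ hu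
  rw [PTree.subtreeAt_append, hu, Option.bind_some] at hv hw
  simp only [PTree.subtreeAt, reduceIte, Bool.false_eq_true] at hv hw
  have hav := PTree.startIdx_append t pu (false :: vs) _ hu
  have haw := PTree.startIdx_append t pu (true :: ws) _ hu
  simp only [PTree.startIdx, reduceIte, Bool.false_eq_true] at hav haw
  have hlev := sl.startIdx_add_le vs sv hv
  have hlew := sr.startIdx_add_le ws sw hw
  have hA := sl.drop_eq_afterLeaves vs sv hv
  have hB := sr.take_eq_beforeLeaves ws sw hw
  have hsplit' : t.str = pre ++ (sl.str ++ (sr.str ++ suf)) := by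
    simpa [PTree.str, List.append_assoc] using hsplit
  rw [hav, haw, hsplit', List.drop_append,
    List.drop_eq_nil_of_le (by omega), List.nil_append]
  have e1 : t.startIdx pu + sl.startIdx vs + sv.str.length - pre.length
      = sl.startIdx vs + sv.str.length := by omega
  rw [e1, List.drop_append, hA, Nat.sub_eq_zero_of_le hlev, List.drop_zero]
  have e2 : t.startIdx pu + (sl.str.length + sr.startIdx ws) -
      (t.startIdx pu + sl.startIdx vs + sv.str.length)
      = (sl.str.length - (sl.startIdx vs + sv.str.length)) + sr.startIdx ws := by omega
  have h3 : (sl.afterLeaves vs).length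
      = sl.str.length - (sl.startIdx vs + sv.str.length) := by
    rw [← hA, List.length_drop]
  rw [e2, List.take_append, List.take_of_length_le (by rw [h3]; omega),
    h3, Nat.add_sub_cancel_left, List.take_append, hB,
    Nat.sub_eq_zero_of_le (by omega), List.take_zero, List.append_nil]
end

section
/- For every string A of length N with parse tree T and every integer 1 ≤ x ≤ N, there exists a partition of A into at most c·N/x consecutive substrings (for an absolute constant c), each of length at most 2x, such that each substring is either exactly the string derived by some vertex of T, or a prefix or suffix of such a derived string. -/
namespace PTreeAux

variable {α : Type}

/-- `S` is a subtree of `t₀`. -/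
def Sub (t₀ S : PTree α) : Prop := ∃ p, t₀.subtreeAt p = some S

lemma sub_refl (t : PTree α) : Sub t t := ⟨[], by simp [PTree.subtreeAt]⟩

lemma subtreeAt_child (t l r : PTree α) (p : List Bool)
    (h : t.subtreeAt p = some (PTree.node l r)) (b : Bool) :
    t.subtreeAt (p ++ [b]) = some (if b then r else l) := by
  induction p generalizing t with
  | nil =>
    simp only [PTree.subtreeAt] at h
    cases h
    cases b <;> simp [PTree.subtreeAt]
  | cons c p ih =>
    cases t with
    | leaf a => simp [PTree.subtreeAt] at h
    | node tl tr =>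
      simp only [PTree.subtreeAt, List.cons_append] at h ⊢
      cases c <;> simp_all

lemma Sub.left {t₀ l r : PTree α} (h : Sub t₀ (PTree.node l r)) : Sub t₀ l := by
  obtain ⟨p, hp⟩ := h
  exact ⟨p ++ [false], by simpa using subtreeAt_child t₀ l r p hp false⟩

lemma Sub.right {t₀ l r : PTree α} (h : Sub t₀ (PTree.node l r)) : Sub t₀ r := by
  obtain ⟨p, hp⟩ := h
  exact ⟨p ++ [true], by simpa using subtreeAt_child t₀ l r p hp true⟩

lemma str_length_pos (t : PTree α) : 0 < t.str.length := by
  induction t with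
  | leaf a => simp [PTree.str]
  | node l r ihl ihr => simp only [PTree.str, List.length_append]; omega

lemma str_ne_nil (t : PTree α) : t.str ≠ [] := by
  have := str_length_pos t
  intro h; simp [h] at this

/-- Main recursive lemma. -/
lemma key (t₀ : PTree α) (x : ℕ) (hx : 1 ≤ x) (s : PTree α) :
    ∀ C D : List α,
      Sub t₀ s →
      (C = [] ∨ ∃ S, Sub t₀ S ∧ (C ++ s.str) <+: S.str) →
      (D = [] ∨ ∃ S, Sub t₀ S ∧ (s.str ++ D) <:+ S.str) →
      C.length ≤ x → D.length ≤ x →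
      x ≤ C.length + s.str.length + D.length →
      ∃ parts : List (List α),
        parts.flatten = C ++ s.str ++ D ∧
        parts.length * x ≤ 2 * (C.length + s.str.length + D.length) ∧
        ∀ P ∈ parts, P ≠ [] ∧ P.length ≤ 2 * x ∧
          ∃ S, Sub t₀ S ∧ (P = S.str ∨ P <+: S.str ∨ P <:+ S.str) := by
  induction s with
  | leaf a =>
    intro C D hs hC hD hCx hDx htot
    simp only [PTree.str, List.length_singleton, List.length_nil] at *
    by_cases hD0 : D = []
    · subst hD0
      refine ⟨[C ++ [a]], by simp, ?_, ?_⟩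
      · simp only [List.length_singleton, one_mul]
        simp only [List.length_nil] at htot ⊢
        omega
      · intro P hP
        simp only [List.mem_singleton] at hP
        subst hP
        refine ⟨by simp, by simp <;> omega, ?_⟩
        rcases hC with rfl | ⟨S, hS, hp⟩
        · exact ⟨PTree.leaf a, hs, Or.inl (by simp [PTree.str])⟩
        · exact ⟨S, hS, Or.inr (Or.inl hp)⟩
    · by_cases hC0 : C = []
      · subst hC0
        rcases hD with rfl | ⟨S, hS, hsuf⟩
        · exact absurd rfl hD0
        refine ⟨[[a] ++ D], by simp, ?_, ?_⟩
        · simp only [List.length_singleton, one_mul]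
          simp only [List.length_nil] at htot ⊢
          omega
        · intro P hP
          simp only [List.mem_singleton] at hP
          subst hP
          exact ⟨by simp, by simp <;> omega, S, hS, Or.inr (Or.inr hsuf)⟩
      · rcases hC with rfl | ⟨S, hS, hp⟩
        · exact absurd rfl hC0
        rcases hD with rfl | ⟨S', hS', hsuf⟩
        · exact absurd rfl hD0
        refine ⟨[C ++ [a], D], by simp, ?_, ?_⟩
        · simp only [List.length_cons, List.length_singleton]
          have : (2 : ℕ) * x ≤ 2 * (C.length + 1 + D.length) := by omega
          simpa [two_mul, Nat.add_mul] using this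
        · intro P hP
          simp only [List.mem_cons, List.mem_singleton, List.not_mem_nil, or_false] at hP
          rcases hP with rfl | rfl
          · exact ⟨by simp, by simp <;> omega, S, hS, Or.inr (Or.inl hp)⟩
          · exact ⟨hD0, by omega, S', hS',
              Or.inr (Or.inr ((List.suffix_append [a] _).trans hsuf))⟩
  | node l r ihl ihr =>
    intro C D hs hC hD hCx hDx htot
    simp only [PTree.str, List.length_append] at *
    have hsl : Sub t₀ l := hs.left
    have hsr : Sub t₀ r := hs.right
    have hnl : 0 < l.str.length := str_length_pos l
    have hnr : 0 < r.str.length := str_length_pos r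
    -- prefix-side invariant pushed to the right child
    have hCl : ∃ S, Sub t₀ S ∧ ((C ++ l.str) ++ r.str) <+: S.str := by
      rcases hC with rfl | ⟨S, hS, hp⟩
      · exact ⟨PTree.node l r, hs, by simp [PTree.str]⟩
      · exact ⟨S, hS, by simpa [List.append_assoc] using hp⟩
    -- suffix-side invariant pushed to the left child
    have hDr : ∃ S, Sub t₀ S ∧ (l.str ++ (r.str ++ D)) <:+ S.str := by
      rcases hD with rfl | ⟨S, hS, hsuf⟩
      · exact ⟨PTree.node l r, hs, by simp [PTree.str]⟩
      · exact ⟨S, hS, by simpa [List.append_assoc] using hsuf⟩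
    -- suffix invariant for the right child alone
    have hDr' : D = [] ∨ ∃ S, Sub t₀ S ∧ (r.str ++ D) <:+ S.str := by
      rcases hD with rfl | ⟨S, hS, hsuf⟩
      · exact Or.inl rfl
      · exact Or.inr ⟨S, hS,
          ((List.suffix_append l.str (r.str ++ D)).trans
            (by simpa [List.append_assoc] using hsuf))⟩
    -- prefix invariant for the left child alone
    have hCl' : C = [] ∨ ∃ S, Sub t₀ S ∧ (C ++ l.str) <+: S.str := by
      rcases hC with rfl | ⟨S, hS, hp⟩
      · exact Or.inl rfl
      · exact Or.inr ⟨S, hS,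
          ((List.prefix_append (C ++ l.str) r.str).trans
            (by simpa [List.append_assoc] using hp))⟩
    by_cases h1 : C.length + l.str.length ≤ x
    · -- absorb l into the left carry
      obtain ⟨parts, hfl, hcnt, hmem⟩ :=
        ihr (C ++ l.str) D hsr (Or.inr hCl) hDr'
          (by simpa using h1) hDx (by simp <;> omega)
      refine ⟨parts, by simpa [List.append_assoc] using hfl, ?_, hmem⟩
      simp only [List.length_append] at hcnt
      omega
    · by_cases h2 : r.str.length + D.length ≤ x
      · -- absorb r into the right carry
        obtain ⟨parts, hfl, hcnt, hmem⟩ :=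
          ihl C (r.str ++ D) hsl hCl' (Or.inr hDr)
            hCx (by simpa using h2) (by simp <;> omega)
        refine ⟨parts, by simpa [List.append_assoc] using hfl, ?_, hmem⟩
        simp only [List.length_append] at hcnt
        omega
      · by_cases h3 : C.length + l.str.length ≤ 2 * x
        · -- emit C ++ l.str as a part, recurse on r with empty left carry
          obtain ⟨parts, hfl, hcnt, hmem⟩ :=
            ihr [] D hsr (Or.inl rfl) hDr' (by simp <;> omega) hDx (by simp <;> omega)
          refine ⟨(C ++ l.str) :: parts, ?_, ?_, ?_⟩
          · simp [hfl, List.append_assoc]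
          · simp only [List.length_cons, List.length_nil] at hcnt ⊢
            have : (parts.length + 1) * x = parts.length * x + x := by ring
            rw [this]
            omega
          · intro P hP
            rcases List.mem_cons.mp hP with rfl | hP'
            · refine ⟨by simp [str_ne_nil l], by simp <;> omega, ?_⟩
              rcases hC with rfl | ⟨S, hS, hp⟩
              · exact ⟨l, hsl, Or.inl (by simp)⟩
              · exact ⟨S, hS, Or.inr (Or.inl
                  ((List.prefix_append (C ++ l.str) r.str).trans
                    (by simpa [List.append_assoc] using hp)))⟩
            · exact hmem P hP'
        · by_cases h4 : r.str.length + D.length ≤ 2 * x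
          · -- emit r.str ++ D as a part, recurse on l with empty right carry
            obtain ⟨parts, hfl, hcnt, hmem⟩ :=
              ihl C [] hsl hCl' (Or.inl rfl) hCx (by simp <;> omega) (by simp <;> omega)
            refine ⟨parts ++ [r.str ++ D], ?_, ?_, ?_⟩
            · simp [hfl, List.append_assoc]
            · simp only [List.length_append, List.length_singleton,
                List.length_nil] at hcnt ⊢
              have : (parts.length + 1) * x = parts.length * x + x := by ring
              rw [this]
              omega
            · intro P hP
              rcases List.mem_append.mp hP with hP' | hP'
              · exact hmem P hP'
              · simp only [List.mem_singleton] at hP'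
                subst hP'
                refine ⟨by simp [str_ne_nil r], by simp <;> omega, ?_⟩
                rcases hD with rfl | ⟨S, hS, hsuf⟩
                · exact ⟨r, hsr, Or.inl (by simp)⟩
                · exact ⟨S, hS, Or.inr (Or.inr
                    ((List.suffix_append l.str (r.str ++ D)).trans
                      (by simpa [List.append_assoc] using hsuf)))⟩
          · -- split: both sides are large
            obtain ⟨partsL, hflL, hcntL, hmemL⟩ :=
              ihl C [] hsl hCl' (Or.inl rfl) hCx (by simp <;> omega) (by simp <;> omega)
            obtain ⟨partsR, hflR, hcntR, hmemR⟩ :=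
              ihr [] D hsr (Or.inl rfl) hDr' (by simp <;> omega) hDx (by simp <;> omega)
            refine ⟨partsL ++ partsR, ?_, ?_, ?_⟩
            · simp [hflL, hflR, List.append_assoc]
            · simp only [List.length_append, List.length_nil] at hcntL hcntR ⊢
              have : (partsL.length + partsR.length) * x
                  = partsL.length * x + partsR.length * x := by ring
              rw [this]
              omega
            · intro P hP
              rcases List.mem_append.mp hP with hP' | hP'
              · exact hmemL P hP'
              · exact hmemR P hP'

end PTreeAux

/-- For every string `A` of length `N` with parse tree `t` and every `1 ≤ x ≤ N`, the string
`A` can be partitioned into at most `c·N/x` consecutive nonempty substrings (for an absolute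
constant `c`), each of length at most `2x`, such that each substring is exactly the string
derived by some vertex of `t`, or a prefix or a suffix of such a derived string. -/
theorem PTree.exists_x_partition :
    ∃ c : ℕ, 0 < c ∧ ∀ (α : Type) (t : PTree α) (x : ℕ), 1 ≤ x → x ≤ t.str.length →
      ∃ parts : List (List α),
        parts.flatten = t.str ∧
        parts.length ≤ c * t.str.length / x ∧
        ∀ P ∈ parts, P ≠ [] ∧ P.length ≤ 2 * x ∧
          ∃ (p : List Bool) (s : PTree α), t.subtreeAt p = some s ∧
            (P = s.str ∨ P <+: s.str ∨ P <:+ s.str) := by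
  refine ⟨2, by norm_num, ?_⟩
  intro α t x hx hxN
  obtain ⟨parts, hfl, hcnt, hmem⟩ :=
    PTreeAux.key t x hx t [] [] (PTreeAux.sub_refl t) (Or.inl rfl) (Or.inl rfl)
      (by simp <;> omega) (by simp <;> omega) (by simpa using hxN)
  refine ⟨parts, by simpa using hfl, ?_, ?_⟩
  · rw [Nat.le_div_iff_mul_le hx]
    simpa using hcnt
  · intro P hP
    obtain ⟨h1, h2, S, ⟨p, hp⟩, h3⟩ := hmem P hP
    exact ⟨h1, h2, p, S, hp, h3⟩
end
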